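/- Let V(G, D) = E_{x∼p}[log D(x)] + E_{x∼q_G}[log(1 − D(x))] where q_G is the generator's density. Then min over generator densities q of max over discriminators D of V equals −log 4, attained exactly when q = p a.e. -/

import Mathlib

/-!
For fixed weights `a, b ≥ 0` the map `t ↦ a log t + b log (1 - t)` on `(0, 1)` has the unique
maximiser `a / (a + b)`; this is Gibbs' inequality `log x ≤ x - 1` in disguise. Integrating
against `μ` shows that `D* = p / (p + q)` maximises `V(q, ·)`, and that it is the a.e. unique
maximiser. The constant discriminator `1/2` gives `V(q, 1/2) = -log 4` for every pair of
densities, hence `-log 4 ≤ V(q, D*)`, with equality iff `1/2 = p / (p + q)` a.e., i.e. iff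
`q = p` a.e.
-/

open MeasureTheory Real

theorem mul_log_lt_mul_log_div_add_sub {a s u : ℝ} (ha : 0 ≤ a) (hs : 0 < s) (hu : 0 < u)
    (hne : u ≠ a / s) : a * log u < a * log (a / s) + (s * u - a) := by
  rcases ha.eq_or_lt with rfl | ha
  · simpa using mul_pos hs hu
  have has : 0 < a / s := div_pos ha hs
  have hlog := log_lt_sub_one_of_pos (div_pos hu has) (mt (div_eq_one_iff_eq has.ne').1 hne)
  rw [log_div hu.ne' has.ne'] at hlog
  have key : a * (u / (a / s) - 1) = s * u - a := by field_simp
  nlinarith [mul_lt_mul_of_pos_left hlog ha]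

theorem mul_log_le_mul_log_div_add_sub {a s u : ℝ} (ha : 0 ≤ a) (hs : 0 < s) (hu : 0 < u) :
    a * log u ≤ a * log (a / s) + (s * u - a) := by
  rcases eq_or_ne u (a / s) with rfl | hne
  · rw [mul_div_cancel₀ a hs.ne', sub_self, add_zero]
  · exact (mul_log_lt_mul_log_div_add_sub ha hs hu hne).le

theorem mul_log_add_mul_log_one_sub_lt {a b t : ℝ} (ha : 0 ≤ a) (hb : 0 ≤ b) (hab : 0 < a + b)
    (ht : t ∈ Set.Ioo 0 1) (hne : t ≠ a / (a + b)) :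
    a * log t + b * log (1 - t) < a * log (a / (a + b)) + b * log (1 - a / (a + b)) := by
  have hcompl : 1 - a / (a + b) = b / (a + b) := by field_simp; ring
  rw [hcompl]
  have h₁ := mul_log_lt_mul_log_div_add_sub ha hab ht.1 hne
  have h₂ := mul_log_le_mul_log_div_add_sub hb hab (sub_pos.2 ht.2)
  linarith

theorem mul_log_add_mul_log_one_sub_le {a b t : ℝ} (ha : 0 ≤ a) (hb : 0 ≤ b) (hab : 0 < a + b)
    (ht : t ∈ Set.Ioo 0 1) :
    a * log t + b * log (1 - t) ≤ a * log (a / (a + b)) + b * log (1 - a / (a + b)) := by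
  rcases eq_or_ne t (a / (a + b)) with rfl | hne
  · rfl
  · exact (mul_log_add_mul_log_one_sub_lt ha hb hab ht hne).le

section GAN

variable {α : Type*} [MeasurableSpace α] (μ : Measure α)

noncomputable def ganValue (p q D : α → ℝ) : ℝ :=
  (∫ x, p x * log (D x) ∂μ) + ∫ x, q x * log (1 - D x) ∂μ

variable {μ} {p q D : α → ℝ}

theorem ganValue_congr_ae {D' : α → ℝ} (h : D =ᵐ[μ] D') :
    ganValue μ p q D = ganValue μ p q D' := by
  unfold ganValue
  congr 1 <;> refine integral_congr_ae ?_ <;> filter_upwards [h] with x hx <;> rw [hx]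

theorem ganValue_half (hp : ∫ x, p x ∂μ = 1) (hq : ∫ x, q x ∂μ = 1) :
    ganValue μ p q (fun _ => 1 / 2) = -log 4 := by
  have hlog4 : log 4 = 2 * log 2 := by
    rw [show (4 : ℝ) = 2 ^ 2 by norm_num, log_pow, Nat.cast_ofNat]
  simp only [ganValue, integral_mul_const, hp, hq]
  rw [show (1 : ℝ) - 1 / 2 = 1 / 2 by norm_num, one_div, log_inv, hlog4]
  ring

section Optimal

variable (hp : 0 ≤ᵐ[μ] p) (hq : 0 ≤ᵐ[μ] q) (hpq : ∀ᵐ x ∂μ, 0 < p x + q x)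
  (hD : ∀ᵐ x ∂μ, D x ∈ Set.Ioo 0 1)
  (hpD : Integrable (fun x => p x * log (D x)) μ)
  (hqD : Integrable (fun x => q x * log (1 - D x)) μ)
  (hpD' : Integrable (fun x => p x * log (p x / (p x + q x))) μ)
  (hqD' : Integrable (fun x => q x * log (1 - p x / (p x + q x))) μ)
include hp hq hpq hD

theorem ae_integrand_le_optimal :
    ∀ᵐ x ∂μ, p x * log (D x) + q x * log (1 - D x) ≤
      p x * log (p x / (p x + q x)) + q x * log (1 - p x / (p x + q x)) := by
  filter_upwards [hp, hq, hpq, hD] with x hpx hqx hpqx hDx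
  exact mul_log_add_mul_log_one_sub_le hpx hqx hpqx hDx

include hpD hqD hpD' hqD'

theorem ganValue_le_ganValue_optimal :
    ganValue μ p q D ≤ ganValue μ p q (fun x => p x / (p x + q x)) := by
  unfold ganValue
  rw [← integral_add hpD hqD, ← integral_add hpD' hqD']
  exact integral_mono_ae (hpD.add hqD) (hpD'.add hqD') (ae_integrand_le_optimal hp hq hpq hD)

theorem ae_eq_optimal_of_ganValue_eq
    (h : ganValue μ p q D = ganValue μ p q (fun x => p x / (p x + q x))) :
    D =ᵐ[μ] fun x => p x / (p x + q x) := by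
  unfold ganValue at h
  rw [← integral_add hpD hqD, ← integral_add hpD' hqD'] at h
  have heq := (integral_eq_iff_of_ae_le (hpD.add hqD) (hpD'.add hqD')
    (ae_integrand_le_optimal hp hq hpq hD)).1 h
  filter_upwards [hp, hq, hpq, hD, heq] with x hpx hqx hpqx hDx hx
  by_contra hne
  exact (mul_log_add_mul_log_one_sub_lt hpx hqx hpqx hDx hne).ne hx

end Optimal

end GAN

theorem stmt_17_general {α : Type*} [MeasurableSpace α] (μ : Measure α)
    (p : α → ℝ) (hp0 : ∀ x, 0 ≤ p x)
    (hp1 : ∫ x, p x ∂μ = 1)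
    (V : (α → ℝ) → (α → ℝ) → ℝ)
    (hV : ∀ q D, V q D = (∫ x, p x * Real.log (D x) ∂μ) +
                         (∫ x, q x * Real.log (1 - D x) ∂μ)) :
    ∀ q : α → ℝ, Measurable q → (∀ x, 0 ≤ q x) → (∫ x, q x ∂μ = 1) →
      (∀ᵐ x ∂μ, 0 < p x + q x) →
      Integrable (fun x => p x * Real.log (p x / (p x + q x))) μ →
      Integrable (fun x => q x * Real.log (1 - p x / (p x + q x))) μ →
      (∀ D : α → ℝ, Measurable D → (∀ x, D x ∈ Set.Ioo (0 : ℝ) 1) →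
        Integrable (fun x => p x * Real.log (D x)) μ →
        Integrable (fun x => q x * Real.log (1 - D x)) μ →
        V q D ≤ V q (fun x => p x / (p x + q x))) ∧
      -Real.log 4 ≤ V q (fun x => p x / (p x + q x)) ∧
      (V q (fun x => p x / (p x + q x)) = -Real.log 4 ↔ q =ᵐ[μ] p) := by
  intro q _ hq0 hq1 hpq hpD' hqD'
  obtain rfl : V = ganValue μ p := funext₂ hV
  have hp : 0 ≤ᵐ[μ] p := .of_forall hp0
  have hq : 0 ≤ᵐ[μ] q := .of_forall hq0
  have hpI : Integrable p μ := .of_integral_ne_zero (by simp [hp1])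
  have hqI : Integrable q μ := .of_integral_ne_zero (by simp [hq1])
  have hhalf : ∀ᵐ x ∂μ, (1 / 2 : ℝ) ∈ Set.Ioo 0 1 := .of_forall fun _ => by norm_num
  have hle_half := ganValue_le_ganValue_optimal hp hq hpq hhalf (hpI.mul_const _)
    (hqI.mul_const _) hpD' hqD'
  rw [ganValue_half hp1 hq1] at hle_half
  refine ⟨fun D _ hD hpD hqD => ganValue_le_ganValue_optimal hp hq hpq (.of_forall hD) hpD hqD
    hpD' hqD', hle_half, fun h => ?_, fun h => ?_⟩
  · rw [← ganValue_half (q := q) hp1 hq1] at h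
    have := ae_eq_optimal_of_ganValue_eq hp hq hpq hhalf (hpI.mul_const _) (hqI.mul_const _)
      hpD' hqD' h.symm
    filter_upwards [this, hpq] with x hx hpqx
    field_simp at hx
    linarith
  · rw [← ganValue_half (q := q) hp1 hq1]
    refine ganValue_congr_ae ?_
    filter_upwards [h, hpq] with x hx hpqx
    have hpx : p x ≠ 0 := by linarith
    rw [hx]
    field_simp
    norm_num

/-- GAN minimax: with V(q, D) = ∫ p·log D + ∫ q·log(1−D), for every generator
density q the inner max over discriminators is attained at D* = p/(p+q); the
resulting value is ≥ −log 4, with equality exactly when q = p a.e. Hence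
min over q of max over D of V equals −log 4, attained exactly at q = p. -/
theorem stmt_17 {α : Type*} [MeasurableSpace α] (μ : Measure α) [SigmaFinite μ]
    (p : α → ℝ) (hpm : Measurable p) (hp0 : ∀ x, 0 ≤ p x)
    (hp1 : ∫ x, p x ∂μ = 1)
    (V : (α → ℝ) → (α → ℝ) → ℝ)
    (hV : ∀ q D, V q D = (∫ x, p x * Real.log (D x) ∂μ) +
                         (∫ x, q x * Real.log (1 - D x) ∂μ)) :
    ∀ q : α → ℝ, Measurable q → (∀ x, 0 ≤ q x) → (∫ x, q x ∂μ = 1) →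
      (∀ᵐ x ∂μ, 0 < p x + q x) →
      Integrable (fun x => p x * Real.log (p x / (p x + q x))) μ →
      Integrable (fun x => q x * Real.log (1 - p x / (p x + q x))) μ →
      (∀ D : α → ℝ, Measurable D → (∀ x, D x ∈ Set.Ioo (0 : ℝ) 1) →
        Integrable (fun x => p x * Real.log (D x)) μ →
        Integrable (fun x => q x * Real.log (1 - D x)) μ →
        V q D ≤ V q (fun x => p x / (p x + q x))) ∧
      -Real.log 4 ≤ V q (fun x => p x / (p x + q x)) ∧
      (V q (fun x => p x / (p x + q x)) = -Real.log 4 ↔ q =ᵐ[μ] p) :=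
  stmt_17_general μ p hp0 hp1 V hV
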